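/- arXiv:1302.0596 — 4 statements merged into one kernel-verified Lean document; each statement's English description precedes it below -/
import Mathlib

section
/- Let D be an F-central division algebra, let G be a subgroup of D^* such that the F-subalgebra of D generated by G is all of D (G is absolutely irreducible), and let A be a normal abelian subgroup of G. Write H = C_G(A) for the centralizer of A in G, and let F[H] and F[A] denote the F-subalgebras of D generated by H and by A respectively. Then: (1) the dimension of D as a left vector space over the division subalgebra F[H] equals the index [G : H]; and (2) F[A] is a commutative subalgebra that is a field, the extension F[A]/F is Galois, and Gal(F[A]/F) is isomorphic to the quotient group G/H. -/
universe u v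

/-! Conjugation by `G` normalizes the commutative algebra `K = F[A]`, which is therefore a field,
and gives a homomorphism `G →* Gal(K/F)` whose kernel is `C_G(A)`. An element of `K` fixed by
all of `G` commutes with `F[G] = D`, so it is central and lies in `F`; by Artin's theorem `K/F`
is Galois and the homomorphism is onto.

For the dimension formula, `H = C_G(A)` is normal in `G`, so coset representatives of `H` span
`D = F[G]` over `F[H]`. They are `F[H]`-linearly independent by a Dedekind-type argument:
distinct cosets act differently by conjugation on `A`, and `A` lies in `F[H]` and commutes
with it. -/

namespace Subgroup

variable {M : Type*} [Group M]

theorem inv_mul_mem_centralizer_of_conj_eq {s : Set M} {g h : M}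
    (hgh : ∀ a ∈ s, g * a * g⁻¹ = h * a * h⁻¹) : h⁻¹ * g ∈ centralizer s := by
  refine mem_centralizer_iff.2 fun a ha => ?_
  calc a * (h⁻¹ * g) = h⁻¹ * (h * a * h⁻¹) * g := by group
    _ = h⁻¹ * (g * a * g⁻¹) * g := by rw [hgh a ha]
    _ = h⁻¹ * g * a := by group

theorem exists_conj_ne_of_mk_ne {s : Set M} {G : Subgroup M} {g h : G}
    (hne : (g : G ⧸ (centralizer s ⊓ G).subgroupOf G) ≠ h) :
    ∃ a ∈ s, (g : M) * a * (g : M)⁻¹ ≠ h * a * (h : M)⁻¹ := by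
  by_contra! heq
  refine hne (QuotientGroup.eq.2 (mem_subgroupOf.2 ⟨?_, (g⁻¹ * h).2⟩))
  exact inv_mul_mem_centralizer_of_conj_eq fun a ha => (heq a ha).symm

theorem normal_centralizer_inf_subgroupOf {s : Set M} {G : Subgroup M}
    (hs : ∀ g ∈ G, ∀ a ∈ s, g * a * g⁻¹ ∈ s) :
    ((centralizer s ⊓ G).subgroupOf G).Normal where
  conj_mem n hn g := by
    obtain ⟨hnc, -⟩ := mem_subgroupOf.1 hn
    refine mem_subgroupOf.2 ⟨mem_centralizer_iff.2 fun a ha => ?_, (g * n * g⁻¹).2⟩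
    have key := mem_centralizer_iff.1 hnc _ (hs _ (G.inv_mem g.2) a ha)
    simp only [inv_inv] at key
    show a * (g * n * (g : M)⁻¹) = g * n * (g : M)⁻¹ * a
    calc a * (g * n * (g : M)⁻¹) = g * (((g : M)⁻¹ * a * g) * n) * (g : M)⁻¹ := by group
      _ = g * (n * ((g : M)⁻¹ * a * g)) * (g : M)⁻¹ := by rw [key]
      _ = g * n * (g : M)⁻¹ * a := by group

theorem coe_closure_val_image {A : Type*} [Monoid A] (G : Subgroup Aˣ) :
    (Submonoid.closure (Units.val '' (G : Set Aˣ)) : Set A) = Units.val '' G :=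
  congrArg SetLike.coe (Submonoid.closure_eq (G.toSubmonoid.map (Units.coeHom A)))

end Subgroup

section Adjoin

variable {R A : Type*} [CommSemiring R] [Semiring A] [Algebra R A]

theorem Algebra.mul_comm_of_mem_adjoin_val_image {s : Set Aˣ}
    (hs : ∀ a ∈ s, ∀ b ∈ s, a * b = b * a) :
    ∀ x ∈ adjoin R (Units.val '' s), ∀ y ∈ adjoin R (Units.val '' s), x * y = y * x := by
  have hval : ∀ a ∈ Units.val '' s, ∀ b ∈ Units.val '' s, Commute a b := by
    rintro _ ⟨a, ha, rfl⟩ _ ⟨b, hb, rfl⟩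
    exact Commute.units_val_iff.2 (hs a ha b hb)
  intro x hx y hy
  refine (commute_of_mem_adjoin_of_forall_mem_commute hy fun b hb => ?_).eq
  exact (commute_of_mem_adjoin_of_forall_mem_commute hx fun a ha => (hval a ha b hb).symm).symm

theorem span_adjoin_range_out_eq_top (G H : Subgroup Aˣ) [(H.subgroupOf G).Normal]
    (hG : Algebra.adjoin R (Units.val '' (G : Set Aˣ)) = ⊤) :
    Submodule.span (Algebra.adjoin R (Units.val '' (H : Set Aˣ)))
      (Set.range fun q : G ⧸ H.subgroupOf G => ((q.out : Aˣ) : A)) = ⊤ := by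
  set S := Algebra.adjoin R (Units.val '' (H : Set Aˣ))
  set M := Submodule.span S (Set.range fun q : G ⧸ H.subgroupOf G => ((q.out : Aˣ) : A))
  suffices h : Subalgebra.toSubmodule (Algebra.adjoin R (Units.val '' (G : Set Aˣ))) ≤
      M.restrictScalars R by
    rwa [hG, Algebra.top_toSubmodule, top_le_iff, Submodule.restrictScalars_eq_top_iff] at h
  rw [Algebra.adjoin_toSubmodule_le, Subgroup.coe_closure_val_image]
  rintro _ ⟨g, hg, rfl⟩
  -- `g = (q h⁻¹ q⁻¹) q`, where `q` represents the coset `g H` and `h ∈ H`.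
  obtain ⟨h, hq⟩ := QuotientGroup.mk_out_eq_mul (H.subgroupOf G) ⟨g, hg⟩
  set q := (QuotientGroup.mk ⟨g, hg⟩ : G ⧸ H.subgroupOf G).out
  have hc : ((q * (h : G)⁻¹ * q⁻¹ : G) : Aˣ) ∈ H :=
    Subgroup.Normal.conj_mem inferInstance _ (inv_mem h.2) q
  have hg : (g : A) = ((q * (h : G)⁻¹ * q⁻¹ : G) : Aˣ) * ((q : Aˣ) : A) := by
    rw [hq]; simp [mul_assoc]
  rw [SetLike.mem_coe, Submodule.restrictScalars_mem, hg]
  exact M.smul_mem ⟨_, Algebra.subset_adjoin ⟨_, hc, rfl⟩⟩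
    (Submodule.subset_span ⟨_, rfl⟩)

end Adjoin

theorem sum_conj_sub_mul_mul_eq {R ι : Type*} [Ring R] (s : Finset ι) (g : ι → R)
    (v : ι → Rˣ) (t c : R) (hc : ∀ l ∈ s, Commute (v l * t * ↑(v l)⁻¹) (g l)) :
    ∑ l ∈ s, (v l * t * ↑(v l)⁻¹ - c) * g l * v l =
      (∑ l ∈ s, g l * v l) * t - c * ∑ l ∈ s, g l * v l := by
  rw [Finset.sum_mul, Finset.mul_sum, ← Finset.sum_sub_distrib]
  refine Finset.sum_congr rfl fun l hl => ?_
  rw [sub_mul, sub_mul, (hc l hl).eq]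
  simp [mul_assoc]

theorem linearIndependent_units_of_conj_separates {R D : Type*} [CommRing R] [DivisionRing D]
    [Algebra R D] (S : Subalgebra R D) (T : Set D) {ι : Type*} (v : ι → Dˣ)
    (hmem : ∀ i, ∀ t ∈ T, v i * t * ↑(v i)⁻¹ ∈ S)
    (hcomm : ∀ i, ∀ t ∈ T, ∀ s ∈ S, Commute (v i * t * ↑(v i)⁻¹) s)
    (hsep : Pairwise fun i j => ∃ t ∈ T, v i * t * ↑(v i)⁻¹ ≠ v j * t * ↑(v j)⁻¹) :
    LinearIndependent S (fun i => (v i : D)) := by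
  classical
  rw [linearIndependent_iff']
  intro s
  induction s using Finset.strongInduction with
  | H s ih =>
  intro g hg i hi
  by_contra hgi
  obtain ⟨j, hj, hji, hgj⟩ : ∃ j ∈ s, j ≠ i ∧ g j ≠ 0 := by
    by_contra! h
    rw [Finset.sum_eq_single_of_mem i hi fun j hj hji => by rw [h j hj hji, zero_smul]] at hg
    exact hgi (by simpa using hg)
  obtain ⟨t, ht, hne⟩ := hsep hji
  set σ : ι → D := fun l => v l * t * ↑(v l)⁻¹
  -- Twisting the relation by `t` kills the `i`-th coefficient but not the `j`-th one.
  let g' : ι → S := fun l =>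
    ⟨(σ l - σ i) * g l, mul_mem (sub_mem (hmem l t ht) (hmem i t ht)) (g l).2⟩
  have hg'i : g' i = 0 := Subtype.ext (by simp [g'])
  have hg' : ∑ l ∈ s.erase i, g' l • (v l : D) = 0 := by
    rw [Finset.sum_erase _ (by rw [hg'i, zero_smul])]
    have hg : ∑ l ∈ s, (g l : D) * v l = 0 := hg
    calc ∑ l ∈ s, g' l • (v l : D) = ∑ l ∈ s, (σ l - σ i) * g l * v l := rfl
      _ = 0 := by
        rw [sum_conj_sub_mul_mul_eq s _ v t _ fun l _ => hcomm l t ht _ (g l).2, hg]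
        simp
  have hj' : (σ j - σ i) * (g j : D) = 0 := congrArg Subtype.val
    (ih _ (Finset.erase_ssubset hi) g' hg' j (Finset.mem_erase.2 ⟨hji, hj⟩))
  rcases mul_eq_zero.1 hj' with h | h
  · exact hne (sub_eq_zero.1 h)
  · exact hgj (Subtype.ext h)

theorem surjective_and_isGalois_of_forall_fixed_mem_range {F K G : Type*} [Field F] [Field K]
    [Algebra F K] [FiniteDimensional F K] [Group G] (φ : G →* (K ≃ₐ[F] K))
    (hφ : ∀ x, (∀ g, φ g x = x) → x ∈ Set.range (algebraMap F K)) :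
    Function.Surjective φ ∧ IsGalois F K := by
  have hfix : IntermediateField.fixedField φ.range = ⊥ :=
    eq_bot_iff.2 fun x hx => IntermediateField.mem_bot.2 (hφ x fun g => hx ⟨φ g, g, rfl⟩)
  have hrange : φ.range = ⊤ := by
    rw [← IntermediateField.fixingSubgroup_fixedField φ.range, hfix,
      IntermediateField.fixingSubgroup_bot]
  exact ⟨MonoidHom.range_eq_top.1 hrange, IsGalois.of_fixedField_eq_bot F K (hrange ▸ hfix)⟩

section DivisionAlgebra

variable {F : Type*} {D : Type u} [Field F] [DivisionRing D] [Algebra F D]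

def conjAut (S : Subalgebra F D) (G : Subgroup Dˣ)
    (hS : ∀ g ∈ G, ∀ x ∈ S, (g : D) * x * ↑g⁻¹ ∈ S) : G →* (S ≃ₐ[F] S) where
  toFun g :=
    { toFun x := ⟨((g : Dˣ) : D) * x * ↑(g : Dˣ)⁻¹, hS g g.2 x x.2⟩
      invFun x :=
        ⟨↑(g : Dˣ)⁻¹ * (x : D) * ↑(g : Dˣ)⁻¹⁻¹, hS _ (G.inv_mem g.2) x x.2⟩
      left_inv x := Subtype.ext <| by simp [mul_assoc]
      right_inv x := Subtype.ext <| by simp [mul_assoc]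
      map_mul' x y := Subtype.ext <| by simp [mul_assoc]
      map_add' x y := Subtype.ext <| by simp [mul_add, add_mul]
      commutes' r := Subtype.ext <| by simp [Algebra.commutes, mul_assoc] }
  map_one' := by ext; simp
  map_mul' g h := by ext; simp [mul_assoc]

@[simp]
theorem conjAut_apply_coe (S : Subalgebra F D) (G : Subgroup Dˣ)
    (hS : ∀ g ∈ G, ∀ x ∈ S, (g : D) * x * ↑g⁻¹ ∈ S) (g : G) (x : S) :
    (conjAut S G hS g x : D) = ((g : Dˣ) : D) * x * ↑(g : Dˣ)⁻¹ :=
  rfl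

theorem conjAut_apply_eq_self_iff (S : Subalgebra F D) (G : Subgroup Dˣ)
    (hS : ∀ g ∈ G, ∀ x ∈ S, (g : D) * x * ↑g⁻¹ ∈ S) (g : G) (x : S) :
    conjAut S G hS g x = x ↔ Commute ((g : Dˣ) : D) x := by
  rw [← Subtype.val_inj, conjAut_apply_coe, Units.mul_inv_eq_iff_eq_mul, commute_iff_eq]

theorem ker_conjAut_adjoin (G A : Subgroup Dˣ)
    (hS : ∀ g ∈ G, ∀ x ∈ Algebra.adjoin F (Units.val '' (A : Set Dˣ)),
      (g : D) * x * ↑g⁻¹ ∈ Algebra.adjoin F (Units.val '' (A : Set Dˣ))) :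
    (conjAut _ G hS).ker = (Subgroup.centralizer (A : Set Dˣ) ⊓ G).subgroupOf G := by
  ext g
  simp only [MonoidHom.mem_ker, AlgEquiv.ext_iff, AlgEquiv.one_apply, conjAut_apply_eq_self_iff,
    Subgroup.mem_subgroupOf, Subgroup.mem_inf, g.2, and_true, Subgroup.mem_centralizer_iff]
  constructor
  · intro h a ha
    exact Commute.units_val_iff.1 (h ⟨a, Algebra.subset_adjoin ⟨a, ha, rfl⟩⟩) |>.symm.eq
  · rintro h ⟨x, hx⟩
    refine Algebra.commute_of_mem_adjoin_of_forall_mem_commute hx ?_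
    rintro _ ⟨a, ha, rfl⟩
    exact Commute.units_val_iff.2 (h a ha).symm

theorem conj_mem_adjoin (s : Set D) (g : Dˣ) (hg : ∀ x ∈ s, (g : D) * x * ↑g⁻¹ ∈ s) :
    ∀ x ∈ Algebra.adjoin F s, (g : D) * x * ↑g⁻¹ ∈ Algebra.adjoin F s := by
  have : Algebra.adjoin F s ≤ (Algebra.adjoin F s).comap
      (MulSemiringAction.toAlgHom F D (ConjAct.toConjAct g)) :=
    Algebra.adjoin_le fun x hx => Algebra.subset_adjoin (hg x hx)
  exact fun x hx => this hx

theorem mem_bot_of_forall_commute (hcenter : Subalgebra.center F D = ⊥) (G : Subgroup Dˣ)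
    (hG : Algebra.adjoin F (Units.val '' (G : Set Dˣ)) = ⊤) {x : D}
    (hx : ∀ g ∈ G, Commute (g : D) x) : x ∈ (⊥ : Subalgebra F D) := by
  rw [← hcenter, Subalgebra.mem_center_iff]
  intro y
  have hy : y ∈ Algebra.adjoin F (Units.val '' (G : Set Dˣ)) := hG ▸ Algebra.mem_top
  exact Algebra.commute_of_mem_adjoin_of_forall_mem_commute (a := x) hy
    (by rintro _ ⟨g, hg, rfl⟩; exact (hx g hg).symm) |>.symm.eq

noncomputable abbrev Subalgebra.fieldOfCommute [FiniteDimensional F D] (S : Subalgebra F D)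
    (hS : ∀ x ∈ S, ∀ y ∈ S, x * y = y * x) : Field S :=
  letI : CommRing S := { S.toRing with mul_comm := fun x y => Subtype.ext (hS _ x.2 _ y.2) }
  fieldOfFiniteDimensional F S

open Subgroup in
theorem finrank_adjoin_centralizer_inf_eq_relIndex [FiniteDimensional F D] (G A : Subgroup Dˣ)
    (hG : Algebra.adjoin F (Units.val '' (G : Set Dˣ)) = ⊤) (hAG : A ≤ G)
    (hnorm : ∀ g ∈ G, ∀ a ∈ A, g * a * g⁻¹ ∈ A)
    (habel : ∀ a ∈ A, ∀ b ∈ A, a * b = b * a) :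
    Module.finrank
        (Algebra.adjoin F (Units.val '' ((centralizer (A : Set Dˣ) ⊓ G : Subgroup Dˣ) :
          Set Dˣ))) D =
      (centralizer (A : Set Dˣ) ⊓ G).relIndex G := by
  set H := centralizer (A : Set Dˣ) ⊓ G
  set S := Algebra.adjoin F (Units.val '' (H : Set Dˣ))
  have : (H.subgroupOf G).Normal := normal_centralizer_inf_subgroupOf hnorm
  let : DivisionRing S := divisionRingOfFiniteDimensional F S
  have hAS : ∀ a ∈ A, (a : D) ∈ S := fun a ha =>
    Algebra.subset_adjoin
      ⟨a, ⟨mem_centralizer_iff.2 fun b hb => habel b hb a ha, hAG ha⟩, rfl⟩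
  have hindep := linearIndependent_units_of_conj_separates S (Units.val '' (A : Set Dˣ))
    (fun q : G ⧸ H.subgroupOf G => (q.out : Dˣ))
    (by
      rintro q _ ⟨a, ha, rfl⟩
      exact_mod_cast hAS _ (hnorm _ q.out.2 a ha))
    (by
      rintro q _ ⟨a, ha, rfl⟩ s hs
      refine Algebra.commute_of_mem_adjoin_of_forall_mem_commute hs ?_
      rintro _ ⟨h, hh, rfl⟩
      exact_mod_cast Commute.units_val_iff.2 (mem_centralizer_iff.1 hh.1 _ (hnorm _ q.out.2 a ha)))
    (by
      intro i j hij
      obtain ⟨a, ha, hne⟩ :=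
        exists_conj_ne_of_mk_ne (s := (A : Set Dˣ)) (g := i.out) (h := j.out) (by simpa using hij)
      exact ⟨a, ⟨a, ha, rfl⟩, fun h => hne (Units.ext (by simpa using h))⟩)
  exact Module.finrank_eq_nat_card_basis
    (Module.Basis.mk hindep (span_adjoin_range_out_eq_top G H hG).ge)

theorem exists_isGalois_adjoin_of_normal [FiniteDimensional F D]
    (hcenter : Subalgebra.center F D = ⊥) (G : Subgroup Dˣ)
    (hG : Algebra.adjoin F (Units.val '' (G : Set Dˣ)) = ⊤) (A : Subgroup Dˣ)
    (hnorm : ∀ g ∈ G, ∀ a ∈ A, g * a * g⁻¹ ∈ A)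
    (habel : ∀ a ∈ A, ∀ b ∈ A, a * b = b * a) :
    ∃ (K : Type u) (_ : Field K) (_ : Algebra F K) (f : K →ₐ[F] D),
      f.range = Algebra.adjoin F (Units.val '' (A : Set Dˣ)) ∧ IsGalois F K ∧
      ∃ φ : G →* (K ≃ₐ[F] K), Function.Surjective φ ∧
        φ.ker = (Subgroup.centralizer (A : Set Dˣ) ⊓ G).subgroupOf G := by
  set K := Algebra.adjoin F (Units.val '' (A : Set Dˣ))
  let : Field K := K.fieldOfCommute (Algebra.mul_comm_of_mem_adjoin_val_image habel)
  have hK : ∀ g ∈ G, ∀ x ∈ K, (g : D) * x * ↑g⁻¹ ∈ K := fun g hg =>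
    conj_mem_adjoin _ g (by rintro _ ⟨a, ha, rfl⟩; exact ⟨_, hnorm g hg a ha, by simp⟩)
  obtain ⟨hsurj, hgal⟩ := surjective_and_isGalois_of_forall_fixed_mem_range (conjAut K G hK)
    fun x hx => by
      obtain ⟨r, hr⟩ := Algebra.mem_bot.1 <| mem_bot_of_forall_commute hcenter G hG
        fun g hg => (conjAut_apply_eq_self_iff K G hK ⟨g, hg⟩ x).1 (hx ⟨g, hg⟩)
      exact ⟨r, Subtype.ext hr⟩
  exact ⟨↥K, inferInstance, inferInstance, K.val, K.range_val, hgal, conjAut K G hK, hsurj,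
    ker_conjAut_adjoin G A hK⟩

end DivisionAlgebra

/-- Let `D` be an `F`-central division algebra, `G ≤ D^*` an absolutely irreducible
subgroup (the `F`-subalgebra generated by `G` is all of `D`), and `A` a normal abelian
subgroup of `G`.  With `H = C_G(A)` the centralizer of `A` in `G`: (1) the dimension of
`D` as a left vector space over the division subalgebra `F[H]` equals the index `[G : H]`;
(2) `F[A]` is commutative, is a field (isomorphic via an `F`-algebra embedding to a field
`K`), `K/F` is Galois, and `Gal(K/F) ≅ G/H` (witnessed by a surjective homomorphism
`G →* Gal(K/F)` with kernel `H`). -/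
theorem stmt_2 {F : Type v} {D : Type u} [Field F] [DivisionRing D] [Algebra F D]
    (hcenter : Subalgebra.center F D = ⊥) [FiniteDimensional F D]
    (G : Subgroup Dˣ)
    (hirr : Algebra.adjoin F (Units.val '' (G : Set Dˣ)) = ⊤)
    (A : Subgroup Dˣ) (hAG : A ≤ G)
    (hnorm : ∀ g ∈ G, ∀ a ∈ A, g * a * g⁻¹ ∈ A)
    (habel : ∀ a ∈ A, ∀ b ∈ A, a * b = b * a) :
    (Module.finrank
        ↥(Algebra.adjoin F (Units.val ''
            ((Subgroup.centralizer (A : Set Dˣ) ⊓ G : Subgroup Dˣ) : Set Dˣ))) D =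
      (Subgroup.centralizer (A : Set Dˣ) ⊓ G).relIndex G) ∧
    (∀ x ∈ Algebra.adjoin F (Units.val '' (A : Set Dˣ)),
      ∀ y ∈ Algebra.adjoin F (Units.val '' (A : Set Dˣ)), x * y = y * x) ∧
    (∃ (K : Type u) (_ : Field K) (_ : Algebra F K) (f : K →ₐ[F] D),
      f.range = Algebra.adjoin F (Units.val '' (A : Set Dˣ)) ∧ IsGalois F K ∧
      ∃ φ : ↥G →* (K ≃ₐ[F] K), Function.Surjective φ ∧
        φ.ker = (Subgroup.centralizer (A : Set Dˣ) ⊓ G).subgroupOf G) :=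
  ⟨finrank_adjoin_centralizer_inf_eq_relIndex G A hirr hAG hnorm habel,
    Algebra.mul_comm_of_mem_adjoin_val_image habel,
    exists_isGalois_adjoin_of_normal hcenter G hirr A hnorm habel⟩
end

section
/- Let D be a division ring and let N be a finite subgroup of the unit group D^*. If N is nilpotent of class at most 2 (i.e. the commutator subgroup of N is contained in the center of N), then either N is cyclic, or N is isomorphic to Q_8 × C, where Q_8 is the quaternion group of order 8 and C is a cyclic group. -/
/-!
Finite commutative subgroups of `Dˣ` are cyclic, as they generate a commutative subring of `D`.
In a finite group of class at most 2 all of whose commutative subgroups are cyclic, commutators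
are bilinear. If `x, y` are `p`-elements with `⁅x, y⁆` of order `p`, then `x ^ p` commutes with
`y`, so one of them is a power of the other; this yields `A = x * y ^ (-t)` with
`⁅A, y⁆ = ⁅x, y⁆` and `A ^ p` a power of `⁅x, y⁆ ^ (p.choose 2)`. For odd `p` this makes `A`
central, which is absurd; for `p = 2`, doing it twice gives `a, b` with
`a ^ 2 = b ^ 2 = ⁅a, b⁆ ≠ 1`, which span a copy of `Q₈`. So commutators are `2`-elements and
elements of odd order are central. Multiplying any `g` by an element of `⟨a, b⟩` makes it
centralize `a` and `b`; then `4` cannot divide its order (else `a` would be a power of it), so it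
is a power of `a ^ 2` times a central element of odd order. Thus the group is `Q₈` times its
cyclic central odd part.
-/

open Subgroup
open scoped commutatorElement

theorem IsCyclic.mem_zpowers_of_orderOf_dvd {α : Type*} [Group α] [Finite α] [IsCyclic α]
    {x y : α} (h : orderOf x ∣ orderOf y) : x ∈ zpowers y := by
  classical
  have := Fintype.ofFinite α
  -- `zpowers y` already supplies `orderOf y` roots of `a ^ orderOf y = 1`, the most a cyclic
  -- group can have.
  by_contra hx
  have hsub : insert x (zpowers y : Set α).toFinset ⊆ ({a | a ^ orderOf y = 1} : Finset α) := by
    intro w hw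
    rcases Finset.mem_insert.mp hw with rfl | hw
    · simpa using orderOf_dvd_iff_pow_eq_one.mp h
    · simpa using orderOf_dvd_iff_pow_eq_one.mp (orderOf_dvd_of_mem_zpowers
        (Set.mem_toFinset.mp hw))
  have hcard := (Finset.card_le_card hsub).trans (IsCyclic.card_pow_eq_one_le (orderOf_pos y))
  rw [Finset.card_insert_of_notMem (by simpa using hx), Set.toFinset_card,
    ← Nat.card_eq_fintype_card, SetLike.coe_sort_coe, Nat.card_zpowers] at hcard
  omega

namespace ClassTwo

variable {G : Type*} [Group G] (hc : ∀ a b : G, ⁅a, b⁆ ∈ center G)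
include hc

theorem commute_commutatorElement (a b g : G) : Commute ⁅a, b⁆ g :=
  ((mem_center_iff.mp (hc a b)) g).symm

theorem commutatorElement_mul_left (a b c : G) : ⁅a * b, c⁆ = ⁅a, c⁆ * ⁅b, c⁆ := by
  rw [commutatorElement_mul_left_eq_conj_mul, ← (commute_commutatorElement hc b c a).eq,
    mul_inv_cancel_right, (commute_commutatorElement hc b c _).eq]

theorem commutatorElement_mul_right (a b c : G) : ⁅a, b * c⁆ = ⁅a, b⁆ * ⁅a, c⁆ := by
  rw [commutatorElement_mul_right_eq_mul_conj, mul_assoc _ b,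
    ← (commute_commutatorElement hc a c b).eq, ← mul_assoc, mul_inv_cancel_right]

def commutatorElementLeftHom (c : G) : G →* G where
  toFun a := ⁅a, c⁆
  map_one' := commutatorElement_one_left c
  map_mul' a b := commutatorElement_mul_left hc a b c

def commutatorElementRightHom (a : G) : G →* G where
  toFun c := ⁅a, c⁆
  map_one' := commutatorElement_one_right a
  map_mul' b c := commutatorElement_mul_right hc a b c

theorem commutatorElement_pow_left (a c : G) (n : ℕ) : ⁅a ^ n, c⁆ = ⁅a, c⁆ ^ n :=
  map_pow (commutatorElementLeftHom hc c) a n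

theorem commutatorElement_pow_right (a c : G) (n : ℕ) : ⁅a, c ^ n⁆ = ⁅a, c⁆ ^ n :=
  map_pow (commutatorElementRightHom hc a) c n

theorem commutatorElement_zpow_left (a c : G) (n : ℤ) : ⁅a ^ n, c⁆ = ⁅a, c⁆ ^ n :=
  map_zpow (commutatorElementLeftHom hc c) a n

theorem commutatorElement_inv_left' (a c : G) : ⁅a⁻¹, c⁆ = ⁅a, c⁆⁻¹ :=
  map_inv (commutatorElementLeftHom hc c) a

theorem mul_pow_eq_commutatorElement_pow_mul (a b : G) (n : ℕ) :
    (a * b) ^ n = ⁅b, a⁆ ^ n.choose 2 * a ^ n * b ^ n := by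
  induction n with
  | zero => simp
  | succ n ih =>
    have hswap : b ^ n * a = ⁅b, a⁆ ^ n * (a * b ^ n) := by
      rw [← commutatorElement_pow_left hc, commutatorElement_def]; group
    have hchoose : (n + 1).choose 2 = n.choose 2 + n := by
      rw [Nat.choose_succ_succ, Nat.choose_one_right, add_comm]
    calc (a * b) ^ (n + 1) = ⁅b, a⁆ ^ n.choose 2 * (a ^ n * (b ^ n * a) * b) := by
          rw [pow_succ, ih]; simp only [mul_assoc]
      _ = ⁅b, a⁆ ^ n.choose 2 * (⁅b, a⁆ ^ n * (a ^ n * (a * b ^ n)) * b) := by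
          rw [hswap, ((commute_commutatorElement hc b a _).pow_left n).symm.left_comm]
      _ = ⁅b, a⁆ ^ (n + 1).choose 2 * a ^ (n + 1) * b ^ (n + 1) := by
          rw [hchoose, pow_add, pow_succ, pow_succ]; simp only [mul_assoc]

theorem commutatorElement_sq_eq_one {a b : G} (hb : b ^ 2 = ⁅a, b⁆) : ⁅a, b⁆ ^ 2 = 1 := by
  rw [← commutatorElement_pow_right hc, hb,
    commutatorElement_eq_one_iff_commute.mpr (commute_commutatorElement hc a b a).symm]

end ClassTwo

theorem isCyclic_of_injective_units {D : Type*} [DivisionRing D] {H : Type*} [Group H]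
    [Finite H] [IsMulCommutative H] (f : H →* Dˣ) (hf : Function.Injective f) : IsCyclic H := by
  open scoped IsMulCommutative in
  let R := Subring.closure (Set.range fun h => (f h : D))
  have : IsMulCommutative R := Subring.isMulCommutative_closure <| by
    rintro _ ⟨g, rfl⟩ _ ⟨h, rfl⟩
    rw [← Units.val_mul, ← Units.val_mul, ← map_mul, ← map_mul, mul_comm' g h]
  exact isCyclic_of_injective_ringHom
    (((Units.coeHom D).comp f).codRestrict R fun h => Subring.subset_closure ⟨h, rfl⟩)
    fun g h hgh => hf (Units.ext (congrArg Subtype.val hgh))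

section CyclicAbelianSubgroups

variable {G : Type*} [Group G] [Finite G]
  (hcyc : ∀ H : Subgroup G, IsMulCommutative H → IsCyclic H)
include hcyc

theorem mem_zpowers_of_commute_of_orderOf_dvd {x y : G} (h : Commute x y)
    (hxy : orderOf x ∣ orderOf y) : x ∈ zpowers y := by
  let K := closure {x, y}
  have hK : IsMulCommutative K := isMulCommutative_closure <| by
    simp only [Set.mem_insert_iff, Set.mem_singleton_iff]
    rintro _ (rfl | rfl) _ (rfl | rfl) <;> first | rfl | exact h.eq | exact h.eq.symm
  have := hcyc K hK
  have hx : x ∈ K := subset_closure (by simp)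
  have hy : y ∈ K := subset_closure (by simp)
  have hmem := mem_map_of_mem K.subtype
    (IsCyclic.mem_zpowers_of_orderOf_dvd (x := ⟨x, hx⟩) (y := ⟨y, hy⟩) (by simpa using hxy))
  rwa [MonoidHom.map_zpowers] at hmem

theorem mem_zpowers_or_mem_zpowers_of_pow_prime_pow_eq_one {p m n : ℕ} (hp : p.Prime) {x y : G}
    (h : Commute x y) (hx : x ^ p ^ m = 1) (hy : y ^ p ^ n = 1) :
    x ∈ zpowers y ∨ y ∈ zpowers x := by
  obtain ⟨i, -, hi⟩ := (Nat.dvd_prime_pow hp).1 (orderOf_dvd_of_pow_eq_one hx)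
  obtain ⟨j, -, hj⟩ := (Nat.dvd_prime_pow hp).1 (orderOf_dvd_of_pow_eq_one hy)
  rcases le_total i j with hij | hij
  · exact .inl <| mem_zpowers_of_commute_of_orderOf_dvd hcyc h (hi ▸ hj ▸ pow_dvd_pow p hij)
  · exact .inr <|
      mem_zpowers_of_commute_of_orderOf_dvd hcyc h.symm (hi ▸ hj ▸ pow_dvd_pow p hij)

theorem mem_center_of_pow_orderOf_eq_one {z w : G} (hz : z ∈ center G)
    (hw : w ^ orderOf z = 1) : w ∈ center G :=
  zpowers_le.mpr hz <| mem_zpowers_of_commute_of_orderOf_dvd hcyc (mem_center_iff.mp hz w)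
    (orderOf_dvd_of_pow_eq_one hw)

end CyclicAbelianSubgroups

theorem exists_pow_pow_prime_pow_eq_one {G : Type*} [Group G] [Finite G] {p : ℕ} (hp : p.Prime)
    (x : G) : ∃ m e : ℕ, ¬p ∣ m ∧ (x ^ m) ^ p ^ e = 1 := by
  obtain ⟨e, m, hm, hx⟩ := Nat.exists_eq_pow_mul_and_not_dvd (orderOf_pos x).ne' p hp.ne_one
  exact ⟨m, e, hm, by rw [← pow_mul, mul_comm, ← hx, pow_orderOf_eq_one]⟩

section PrimePowerElements

open ClassTwo

variable {G : Type*} [Group G] [Finite G] (hc : ∀ a b : G, ⁅a, b⁆ ∈ center G)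
include hc

theorem exists_orderOf_commutatorElement_eq_prime {p : ℕ} (hp : p.Prime) {x y : G}
    (hpc : p ∣ orderOf ⁅x, y⁆) :
    ∃ (x' y' : G) (m n : ℕ), x' ^ p ^ m = 1 ∧ y' ^ p ^ n = 1 ∧ orderOf ⁅x', y'⁆ = p := by
  set y₀ := y ^ (orderOf ⁅x, y⁆ / p)
  have h₀ : orderOf ⁅x, y₀⁆ = p := by
    rw [commutatorElement_pow_right hc]
    exact orderOf_pow_orderOf_div (orderOf_pos _).ne' hpc
  obtain ⟨m, e, hm, hxm⟩ := exists_pow_pow_prime_pow_eq_one hp x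
  obtain ⟨m', f, hm', hym⟩ := exists_pow_pow_prime_pow_eq_one hp y₀
  refine ⟨x ^ m, y₀ ^ m', e, f, hxm, hym, ?_⟩
  have hcop : (orderOf ⁅x, y₀⁆).Coprime (m' * m) := h₀ ▸
    Nat.Coprime.mul_right (hp.coprime_iff_not_dvd.mpr hm') (hp.coprime_iff_not_dvd.mpr hm)
  rw [commutatorElement_pow_left hc, commutatorElement_pow_right hc, ← pow_mul, hcop.orderOf_pow,
    h₀]

variable (hcyc : ∀ H : Subgroup G, IsMulCommutative H → IsCyclic H)
include hcyc


theorem pow_ne_one_of_commutatorElement_eq {p : ℕ} {x y A : G} (hord : orderOf ⁅x, y⁆ = p)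
    (hp : p ≠ 1) (hA : ⁅A, y⁆ = ⁅x, y⁆) : A ^ p ≠ 1 := by
  intro hAp
  have hAcen := mem_center_of_pow_orderOf_eq_one hcyc (hc x y) (hord ▸ hAp)
  rw [← hA, commutatorElement_eq_one_iff_commute.mpr (mem_center_iff.mp hAcen y).symm,
    orderOf_one] at hord
  exact hp hord.symm

theorem exists_commutatorElement_eq_and_pow_eq {p m n : ℕ} (hp : p.Prime) {x y : G}
    (hx : x ^ p ^ m = 1) (hy : y ^ p ^ n = 1) (hord : orderOf ⁅x, y⁆ = p) :
    ∃ (A : G) (k : ℕ), ⁅A, y⁆ = ⁅x, y⁆ ∧ A ^ p = ⁅x, y⁆ ^ (k * p.choose 2) := by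
  have hxy : ¬Commute x y := fun h => by
    rw [commutatorElement_eq_one_iff_commute.mpr h, orderOf_one] at hord
    exact hp.ne_one hord.symm
  have hxp : Commute (x ^ p) y := commutatorElement_eq_one_iff_commute.mp <| by
    rw [commutatorElement_pow_left hc, ← hord, pow_orderOf_eq_one]
  have hxpm : (x ^ p) ^ p ^ m = 1 := by rw [← pow_mul, mul_comm, pow_mul, hx, one_pow]
  rcases mem_zpowers_or_mem_zpowers_of_pow_prime_pow_eq_one hcyc hp hxp hxpm hy with hmem | hmem
  · obtain ⟨s, hs⟩ := (Submonoid.mem_powers_iff _ _).mp (mem_powers_iff_mem_zpowers.mpr hmem)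
    by_cases hps : p ∣ s
    · obtain ⟨t, rfl⟩ := hps
      refine ⟨x * (y ^ t)⁻¹, t, ?_, ?_⟩
      · rw [commutatorElement_mul_left hc, commutatorElement_eq_one_iff_commute.mpr
          ((Commute.refl y).pow_left t).inv_left, mul_one]
      · have hyx : ⁅(y ^ t)⁻¹, x⁆ = ⁅x, y⁆ ^ t := by
          rw [commutatorElement_inv_left' hc, commutatorElement_pow_left hc,
            ← commutatorElement_inv, inv_pow, inv_inv]
        rw [mul_pow_eq_commutatorElement_pow_mul hc, hyx, ← pow_mul, inv_pow, ← pow_mul,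
          mul_comm t p, hs, mul_inv_cancel_right]
    · obtain ⟨j, -, hj⟩ := (Nat.dvd_prime_pow hp).1 (orderOf_dvd_of_pow_eq_one hy)
      obtain ⟨k, hk⟩ := exists_pow_eq_self_of_coprime
        (hj ▸ Nat.Coprime.pow_right j ((Nat.coprime_comm.mp (hp.coprime_iff_not_dvd.mpr hps))))
      refine absurd ?_ hxy
      rw [← hk, hs, ← pow_mul]
      exact (Commute.refl x).pow_right _
  · obtain ⟨k, hk⟩ := (Submonoid.mem_powers_iff _ _).mp (mem_powers_iff_mem_zpowers.mpr hmem)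
    refine absurd ?_ hxy
    rw [← hk, ← pow_mul]
    exact (Commute.refl x).pow_right _

theorem orderOf_commutatorElement_ne_of_ne_two {p m n : ℕ} (hp : p.Prime) (hp2 : p ≠ 2)
    {x y : G} (hx : x ^ p ^ m = 1) (hy : y ^ p ^ n = 1) : orderOf ⁅x, y⁆ ≠ p := by
  intro hord
  obtain ⟨A, k, hA, hAp⟩ := exists_commutatorElement_eq_and_pow_eq hc hcyc hp hx hy hord
  obtain ⟨r, hr⟩ := hp.dvd_choose_self two_ne_zero (lt_of_le_of_ne hp.two_le (Ne.symm hp2))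
  refine pow_ne_one_of_commutatorElement_eq hc hcyc hord hp.ne_one hA ?_
  rw [hAp, hr, mul_left_comm, pow_mul, ← hord, pow_orderOf_eq_one, one_pow]

theorem exists_sq_eq_commutatorElement {m n : ℕ} {x y : G} (hx : x ^ 2 ^ m = 1)
    (hy : y ^ 2 ^ n = 1) (hord : orderOf ⁅x, y⁆ = 2) :
    ∃ A : G, ⁅A, y⁆ = ⁅x, y⁆ ∧ A ^ 2 = ⁅x, y⁆ := by
  obtain ⟨A, k, hA, hA2⟩ :=
    exists_commutatorElement_eq_and_pow_eq hc hcyc Nat.prime_two hx hy hord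
  refine ⟨A, hA, ?_⟩
  rw [Nat.choose_self, mul_one] at hA2
  rcases Nat.even_or_odd k with ⟨r, rfl⟩ | ⟨r, rfl⟩
  · refine absurd ?_ (pow_ne_one_of_commutatorElement_eq hc hcyc hord (by norm_num) hA)
    rw [hA2, ← two_mul, pow_mul, ← hord, pow_orderOf_eq_one, one_pow]
  · rw [hA2, pow_succ, pow_mul, ← hord, pow_orderOf_eq_one, one_pow, one_mul]

theorem exists_quaternion_pair_of_orderOf_commutatorElement_eq_two {m n : ℕ} {x y : G}
    (hx : x ^ 2 ^ m = 1) (hy : y ^ 2 ^ n = 1) (hord : orderOf ⁅x, y⁆ = 2) :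
    ∃ a b : G, a ^ 2 = ⁅a, b⁆ ∧ b ^ 2 = ⁅a, b⁆ ∧ ⁅a, b⁆ ≠ 1 := by
  have hinv : ⁅x, y⁆⁻¹ = ⁅x, y⁆ :=
    inv_eq_of_mul_eq_one_left (by rw [← sq, ← hord, pow_orderOf_eq_one])
  obtain ⟨A, hA, hA2⟩ := exists_sq_eq_commutatorElement hc hcyc hx hy hord
  have hyA : ⁅y, A⁆ = ⁅x, y⁆ := by rw [← commutatorElement_inv, hA, hinv]
  obtain ⟨B, hB, hB2⟩ := exists_sq_eq_commutatorElement (m := n) (n := 2) hc hcyc hy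
    (by rw [pow_two 2, pow_mul, hA2, ← hord, pow_orderOf_eq_one]) (hyA ▸ hord)
  have hAB : ⁅A, B⁆ = ⁅x, y⁆ := by rw [← commutatorElement_inv, hB, hyA, hinv]
  refine ⟨A, B, hAB ▸ hA2, hAB ▸ hyA ▸ hB2, hAB ▸ fun h => ?_⟩
  rw [h, orderOf_one] at hord
  exact absurd hord (by norm_num)

theorem eq_two_of_prime_dvd_orderOf_commutatorElement {p : ℕ} (hp : p.Prime) {x y : G}
    (hpc : p ∣ orderOf ⁅x, y⁆) : p = 2 := by
  by_contra hp2
  obtain ⟨x', y', m, n, hx, hy, hord⟩ := exists_orderOf_commutatorElement_eq_prime hc hp hpc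
  exact orderOf_commutatorElement_ne_of_ne_two hc hcyc hp hp2 hx hy hord

theorem mem_center_of_odd_orderOf {u : G} (hu : Odd (orderOf u)) : u ∈ center G := by
  refine mem_center_iff.mpr fun g => commutatorElement_eq_one_iff_mul_comm.mp ?_
  by_contra hne
  obtain ⟨p, hp, hpc⟩ := Nat.exists_prime_and_dvd (mt orderOf_eq_one_iff.mp hne)
  have hdvd : orderOf ⁅g, u⁆ ∣ orderOf u := orderOf_dvd_of_pow_eq_one <| by
    rw [← commutatorElement_pow_right hc, pow_orderOf_eq_one, commutatorElement_one_right]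
  rw [eq_two_of_prime_dvd_orderOf_commutatorElement hc hcyc hp hpc] at hpc
  exact Nat.not_even_iff_odd.mpr hu (even_iff_two_dvd.mpr (hpc.trans hdvd))

theorem exists_quaternion_pair {x y : G} (hxy : ¬Commute x y) :
    ∃ a b : G, a ^ 2 = ⁅a, b⁆ ∧ b ^ 2 = ⁅a, b⁆ ∧ ⁅a, b⁆ ≠ 1 := by
  have hne : orderOf ⁅x, y⁆ ≠ 1 :=
    mt orderOf_eq_one_iff.mp (mt commutatorElement_eq_one_iff_commute.mp hxy)
  obtain ⟨p, hp, hpc⟩ := Nat.exists_prime_and_dvd hne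
  obtain rfl := eq_two_of_prime_dvd_orderOf_commutatorElement hc hcyc hp hpc
  obtain ⟨x', y', m, n, hx, hy, hord⟩ := exists_orderOf_commutatorElement_eq_prime hc hp hpc
  exact exists_quaternion_pair_of_orderOf_commutatorElement_eq_two hc hcyc hx hy hord

end PrimePowerElements

theorem pow_zmod_val_add {M : Type*} [Monoid M] {m : ℕ} [NeZero m] {a : M} (ha : a ^ m = 1)
    (i j : ZMod m) : a ^ (i + j).val = a ^ i.val * a ^ j.val := by
  rw [ZMod.val_add, ← pow_eq_pow_mod _ ha, pow_add]

theorem pow_zmod_val_neg {G : Type*} [Group G] {m : ℕ} [NeZero m] {a : G} (ha : a ^ m = 1)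
    (i : ZMod m) : a ^ (-i).val = (a ^ i.val)⁻¹ :=
  eq_inv_of_mul_eq_one_left <| by
    rw [← pow_zmod_val_add ha, neg_add_cancel, ZMod.val_zero, pow_zero]

namespace QuaternionGroup

variable {n : ℕ} [NeZero n] {G : Type*} [Group G] {a b : G}

def lift (ha : a ^ (2 * n) = 1) (hb : b ^ 2 = a ^ n) (hba : b * a * b⁻¹ = a⁻¹) :
    QuaternionGroup n →* G where
  toFun
    | .a i => a ^ i.val
    | .xa i => b * a ^ i.val
  map_one' := by
    change a ^ (0 : ZMod (2 * n)).val = 1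
    rw [ZMod.val_zero, pow_zero]
  map_mul' := by
    have hconj (i : ZMod (2 * n)) : b * a ^ i.val = a ^ (-i).val * b := by
      rw [pow_zmod_val_neg ha, ← inv_pow, ← hba, conj_pow, inv_mul_cancel_right]
    have hn : a ^ (n : ZMod (2 * n)).val = a ^ n := by
      rw [ZMod.val_natCast, Nat.mod_eq_of_lt (by have := NeZero.pos n; omega)]
    rintro (i | i) (j | j)
    · exact pow_zmod_val_add ha i j
    · change b * a ^ (j - i).val = a ^ i.val * (b * a ^ j.val)
      rw [sub_eq_neg_add, pow_zmod_val_add ha, ← mul_assoc, hconj, neg_neg, mul_assoc]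
    · change b * a ^ (i + j).val = b * a ^ i.val * a ^ j.val
      rw [pow_zmod_val_add ha, mul_assoc]
    · change a ^ ((n : ZMod (2 * n)) + j - i).val = b * a ^ i.val * (b * a ^ j.val)
      rw [add_sub_assoc, sub_eq_neg_add, pow_zmod_val_add ha, pow_zmod_val_add ha, hn, ← hb,
        mul_assoc b, ← mul_assoc _ b, ← neg_neg i, ← hconj, neg_neg]
      simp only [sq, mul_assoc]

theorem lift_a (ha : a ^ (2 * n) = 1) (hb : b ^ 2 = a ^ n) (hba : b * a * b⁻¹ = a⁻¹)
    (i : ZMod (2 * n)) : lift ha hb hba (.a i) = a ^ i.val :=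
  rfl

theorem lift_xa (ha : a ^ (2 * n) = 1) (hb : b ^ 2 = a ^ n) (hba : b * a * b⁻¹ = a⁻¹)
    (i : ZMod (2 * n)) : lift ha hb hba (.xa i) = b * a ^ i.val :=
  rfl

theorem lift_injective (ha : a ^ (2 * n) = 1) (hb : b ^ 2 = a ^ n) (hba : b * a * b⁻¹ = a⁻¹)
    (hord : orderOf a = 2 * n) (hab : ¬Commute a b) : Function.Injective (lift ha hb hba) := by
  refine (injective_iff_map_eq_one _).mpr ?_
  rintro (i | i) h
  · rw [lift_a] at h
    have hdvd : 2 * n ∣ i.val := hord.symm.dvd.trans (orderOf_dvd_of_pow_eq_one h)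
    have hi := Nat.eq_zero_of_dvd_of_lt hdvd (ZMod.val_lt i)
    rw [(ZMod.val_eq_zero i).mp hi, a_zero]
  · rw [lift_xa, ← eq_inv_iff_mul_eq_one] at h
    exact absurd (h ▸ ((Commute.refl a).pow_right i.val).inv_right) hab

end QuaternionGroup

theorem nonempty_mulEquiv_prod_of_injective {G M : Type*} [Group G] [Group M] {f : M →* G}
    (hf : Function.Injective f) {K : Subgroup G} (hK : ∀ m, ∀ k ∈ K, Commute (f m) k)
    (hdisj : Disjoint f.range K) (hsup : f.range ⊔ K = ⊤) : Nonempty (G ≃* M × K) := by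
  have comm (m) (k : K) : Commute (f m) (K.subtype k) := hK m k k.2
  refine ⟨(MulEquiv.ofBijective (f.noncommCoprod K.subtype comm) ⟨?_, ?_⟩).symm⟩
  · exact (MonoidHom.noncommCoprod_injective _ _ comm).mpr
      ⟨hf, K.subtype_injective, by rwa [range_subtype]⟩
  · rw [← MonoidHom.range_eq_top, MonoidHom.noncommCoprod_range, range_subtype, hsup]

theorem mul_mul_inv_eq_inv_of_sq_eq_commutatorElement {G : Type*} [Group G] {a b : G}
    (ha : a ^ 2 = ⁅a, b⁆) (hz : ⁅a, b⁆ ^ 2 = 1) : b * a * b⁻¹ = a⁻¹ := by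
  have hba : b * a * b⁻¹ * a⁻¹ = a ^ 2 := by
    rw [← commutatorElement_def, ← commutatorElement_inv, ha,
      inv_eq_of_mul_eq_one_left (by rw [← sq, hz])]
  refine eq_inv_of_mul_eq_one_left ?_
  calc b * a * b⁻¹ * a = b * a * b⁻¹ * a⁻¹ * a ^ 2 := by group
    _ = 1 := by rw [hba, ← pow_add, ← two_mul, pow_mul, ha, hz]

def centralOddPart (G : Type*) [Group G] : Subgroup G where
  carrier := {u | u ∈ center G ∧ Odd (orderOf u)}
  mul_mem' := fun ⟨hu, hu'⟩ ⟨hv, hv'⟩ => ⟨mul_mem hu hv,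
    (hu'.mul hv').of_dvd_nat (Commute.orderOf_mul_dvd_mul_orderOf (mem_center_iff.mp hv _))⟩
  one_mem' := ⟨one_mem _, by simp⟩
  inv_mem' := fun ⟨hu, hu'⟩ => ⟨inv_mem hu, by rwa [orderOf_inv]⟩

theorem disjoint_centralOddPart {G : Type*} [Group G] {Q : Subgroup G} {k : ℕ}
    (hQ : ∀ q ∈ Q, q ^ 2 ^ k = 1) : Disjoint Q (centralOddPart G) := by
  rw [disjoint_iff_inf_le]
  rintro w ⟨hwQ, -, hodd⟩
  have hcop : (orderOf w).Coprime (2 ^ k) :=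
    Nat.Coprime.pow_right k (Nat.coprime_two_right.mpr hodd)
  exact orderOf_eq_one_iff.mp (hcop.eq_one_of_dvd (orderOf_dvd_of_pow_eq_one (hQ w hwQ)))

section QuaternionDecomposition

open ClassTwo

variable {G : Type*} [Group G] [Finite G] (hc : ∀ a b : G, ⁅a, b⁆ ∈ center G)
  (hcyc : ∀ H : Subgroup G, IsMulCommutative H → IsCyclic H)
include hc hcyc

theorem exists_mem_commute_mul {Q : Subgroup G} {a b : G} (haQ : a ∈ Q) (hbQ : b ∈ Q)
    (ha : a ^ 2 = ⁅a, b⁆) (hb : b ^ 2 = ⁅a, b⁆) (hz : orderOf ⁅a, b⁆ = 2) (g : G) :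
    ∃ h ∈ Q, Commute (g * h) a ∧ Commute (g * h) b := by
  have hmem {c : G} (hc2 : c ^ 2 = ⁅a, b⁆) : ⁅g, c⁆ ∈ zpowers ⁅a, b⁆ :=
    have hsq : ⁅g, c⁆ ^ 2 = 1 := by
      rw [← commutatorElement_pow_right hc, hc2,
        commutatorElement_eq_one_iff_commute.mpr (commute_commutatorElement hc a b g).symm]
    mem_zpowers_of_commute_of_orderOf_dvd hcyc (commute_commutatorElement hc _ _ _)
      ((orderOf_dvd_of_pow_eq_one hsq).trans hz.symm.dvd)
  obtain ⟨i, hi⟩ := mem_zpowers_iff.mp (hmem ha)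
  obtain ⟨j, hj⟩ := mem_zpowers_iff.mp (hmem hb)
  -- `⁅b ^ i, a⁆` and `⁅(a ^ j)⁻¹, b⁆` cancel `⁅g, a⁆ = ⁅a, b⁆ ^ i` and `⁅g, b⁆ = ⁅a, b⁆ ^ j`.
  refine ⟨b ^ i * (a ^ j)⁻¹, mul_mem (zpow_mem hbQ i) (inv_mem (zpow_mem haQ j)), ?_, ?_⟩ <;>
    rw [← commutatorElement_eq_one_iff_commute, commutatorElement_mul_left hc,
      commutatorElement_mul_left hc, commutatorElement_inv_left' hc,
      commutatorElement_zpow_left hc, commutatorElement_zpow_left hc]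
  · rw [← hi, ← commutatorElement_inv, commutatorElement_self, one_zpow, inv_one, mul_one,
      inv_zpow, inv_mul_cancel]
  · rw [← hj, commutatorElement_self, one_zpow, one_mul, mul_inv_cancel]

theorem mem_sup_centralOddPart_of_commute {Q : Subgroup G} {a b w : G} (haQ : a ∈ Q)
    (ha : orderOf a = 4) (hab : ¬Commute a b) (hwa : Commute w a) (hwb : Commute w b) :
    w ∈ Q ⊔ centralOddPart G := by
  obtain ⟨e, m, hm, hw⟩ := Nat.exists_eq_pow_mul_and_not_dvd (orderOf_pos w).ne' 2 (by norm_num)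
  have he : e ≤ 1 := by
    by_contra! he
    have ha_dvd : orderOf a ∣ orderOf w :=
      ha ▸ hw ▸ Dvd.dvd.mul_right (pow_dvd_pow 2 he : 2 ^ 2 ∣ 2 ^ e) m
    obtain ⟨k, rfl⟩ :=
      mem_zpowers_iff.mp (mem_zpowers_of_commute_of_orderOf_dvd hcyc hwa.symm ha_dvd)
    exact hab (hwb.zpow_left k)
  have hw2m : w ^ (2 * m) = 1 := orderOf_dvd_iff_pow_eq_one.mp <|
    hw ▸ mul_dvd_mul_right ((pow_dvd_pow 2 he).trans (pow_one 2).dvd) m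
  have ha2 : orderOf (a ^ 2) = 2 := by rw [orderOf_pow' a two_ne_zero, ha]; rfl
  have hv : w ^ m ∈ Q := zpowers_le.mpr (pow_mem haQ 2) <|
    mem_zpowers_of_commute_of_orderOf_dvd hcyc (hwa.pow_pow m 2) <|
      (orderOf_dvd_of_pow_eq_one (by rw [← pow_mul, mul_comm, hw2m])).trans ha2.symm.dvd
  have hodd : Odd (orderOf (w ^ (m + 1))) := by
    obtain ⟨r, hr⟩ := Nat.even_add_one.mpr (mt even_iff_two_dvd.mp hm)
    refine (Nat.odd_iff.mpr (Nat.two_dvd_ne_zero.mp hm)).of_dvd_nat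
      (orderOf_dvd_of_pow_eq_one ?_)
    rw [← pow_mul, hr, ← two_mul, mul_assoc, mul_comm r, ← mul_assoc, pow_mul, hw2m, one_pow]
  have hu : w ^ (m + 1) ∈ centralOddPart G := ⟨mem_center_of_odd_orderOf hc hcyc hodd, hodd⟩
  rw [← mul_inv_cancel_right w (w ^ m), ← pow_succ']
  exact mul_mem (mem_sup_right hu) (mem_sup_left (inv_mem hv))

theorem sup_centralOddPart_eq_top {Q : Subgroup G} {a b : G} (haQ : a ∈ Q) (hbQ : b ∈ Q)
    (ha : a ^ 2 = ⁅a, b⁆) (hb : b ^ 2 = ⁅a, b⁆) (hab : ⁅a, b⁆ ≠ 1) :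
    Q ⊔ centralOddPart G = ⊤ := by
  have hz2 := commutatorElement_sq_eq_one hc hb
  have hord : orderOf a = 4 :=
    orderOf_eq_prime_pow (p := 2) (n := 1) (by rwa [pow_one, ha])
      (by rw [pow_succ, pow_one, pow_mul, ha, hz2])
  have hnc : ¬Commute a b := mt commutatorElement_eq_one_iff_commute.mpr hab
  refine eq_top_iff.mpr fun w _ => ?_
  obtain ⟨h, hQ, hwa, hwb⟩ :=
    exists_mem_commute_mul hc hcyc haQ hbQ ha hb (orderOf_eq_prime hz2 hab) w
  simpa using mul_mem (mem_sup_centralOddPart_of_commute hc hcyc haQ hord hnc hwa hwb)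
    (mem_sup_left (inv_mem hQ))

theorem nonempty_mulEquiv_quaternionGroup_prod {a b : G} (ha : a ^ 2 = ⁅a, b⁆)
    (hb : b ^ 2 = ⁅a, b⁆) (hab : ⁅a, b⁆ ≠ 1) :
    Nonempty (G ≃* QuaternionGroup 2 × Multiplicative (ZMod (Nat.card (centralOddPart G)))) := by
  have hz2 := commutatorElement_sq_eq_one hc hb
  have ha4 : a ^ (2 * 2) = 1 := by rw [pow_mul, ha, hz2]
  let f := QuaternionGroup.lift ha4 (hb.trans ha.symm)
    (mul_mul_inv_eq_inv_of_sq_eq_commutatorElement ha hz2)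
  have hf : Function.Injective f := QuaternionGroup.lift_injective _ _ _
    (orderOf_eq_prime_pow (p := 2) (n := 1) (by rwa [pow_one, ha]) ha4)
    (mt commutatorElement_eq_one_iff_commute.mpr hab)
  have hdisj : Disjoint f.range (centralOddPart G) := by
    refine disjoint_centralOddPart (k := 2) fun w hw => ?_
    obtain ⟨q, rfl⟩ := MonoidHom.mem_range.mp hw
    have hq : q ^ 2 ^ 2 = 1 := by
      simpa [QuaternionGroup.exponent] using Monoid.pow_exponent_eq_one q
    rw [← map_pow, hq, map_one]
  have hsup := sup_centralOddPart_eq_top hc hcyc (Q := f.range) ⟨.a 1, pow_one a⟩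
    ⟨.xa 0, by rw [QuaternionGroup.lift_xa, ZMod.val_zero, pow_zero, mul_one]⟩ ha hb hab
  obtain ⟨φ⟩ := nonempty_mulEquiv_prod_of_injective hf (K := centralOddPart G)
    (fun q _ hk => mem_center_iff.mp hk.1 (f q)) hdisj hsup
  have hO : IsCyclic (centralOddPart G) := hcyc _ <|
    IsMulCommutative.of_setLike_mul_comm fun u _ v hv => mem_center_iff.mp hv.1 u
  exact ⟨φ.trans (MulEquiv.prodCongr (MulEquiv.refl _) (zmodCyclicMulEquiv hO).symm)⟩

theorem isCyclic_or_nonempty_mulEquiv_quaternionGroup_prod :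
    IsCyclic G ∨ ∃ (C : Type) (_ : Group C) (_ : IsCyclic C),
      Nonempty (G ≃* QuaternionGroup 2 × C) := by
  by_cases hcomm : ∃ x y : G, ¬Commute x y
  · obtain ⟨x, y, hxy⟩ := hcomm
    obtain ⟨a, b, ha, hb, hab⟩ := exists_quaternion_pair hc hcyc hxy
    exact .inr ⟨_, _, inferInstance, nonempty_mulEquiv_quaternionGroup_prod hc hcyc ha hb hab⟩
  · simp only [not_exists, not_not] at hcomm
    exact .inl <| (MulEquiv.isCyclic topEquiv).mp <|
      hcyc ⊤ (IsMulCommutative.of_setLike_mul_comm fun x _ y _ => hcomm x y)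

end QuaternionDecomposition

/-- Let `D` be a division ring and `N` a finite subgroup of `D^*`.  If `N` is nilpotent of
class at most 2 (its commutator subgroup lies in its center), then `N` is either cyclic or
isomorphic to `Q₈ × C` with `C` cyclic, where `Q₈ = QuaternionGroup 2` is the quaternion
group of order 8. -/
theorem stmt_4 {D : Type u} [DivisionRing D]
    (N : Subgroup Dˣ) (hfin : Finite ↥N)
    (hclass2 : ∀ a b : ↥N, a * b * a⁻¹ * b⁻¹ ∈ Subgroup.center ↥N) :
    IsCyclic ↥N ∨
      ∃ (C : Type) (_ : Group C) (_ : IsCyclic C),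
        Nonempty (↥N ≃* QuaternionGroup 2 × C) :=
  isCyclic_or_nonempty_mulEquiv_quaternionGroup_prod hclass2 fun H _ =>
    isCyclic_of_injective_units (N.subtype.comp H.subtype)
      (N.subtype_injective.comp H.subtype_injective)
end

section
/- (Wedderburn Factorization Theorem) Let D be a division ring with center F and let u ∈ D be algebraic over F with minimal polynomial f ∈ F[x] of degree m. Then there exist units d_1, …, d_m ∈ D^* such that, in the polynomial ring D[x], the image of f under the inclusion F[x] → D[x] factors as f = (x − d_m u d_m^{-1})·(x − d_{m−1} u d_{m−1}^{-1})⋯(x − d_1 u d_1^{-1}); in particular f splits completely over D into linear factors whose roots are conjugates of u. -/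
universe u v

open Polynomial

section Wedderburn

variable {F : Type v} {D : Type u} [Field F] [DivisionRing D] [Algebra F D]

/-- Conjugation by a unit, as an `F`-algebra homomorphism. -/
def wfConj (c : Dˣ) : D →ₐ[F] D where
  toFun x := ↑c * x * ↑c⁻¹
  map_one' := by simp
  map_mul' x y := by simp [mul_assoc]
  map_zero' := by simp
  map_add' x y := by simp [mul_add, add_mul]
  commutes' r := by
    show ↑c * algebraMap F D r * ↑c⁻¹ = algebraMap F D r
    rw [mul_assoc, Algebra.commutes r (↑c⁻¹ : D), ← mul_assoc]
    simp

lemma wfConj_apply (c : Dˣ) (x : D) : wfConj (F := F) c x = ↑c * x * ↑c⁻¹ := rfl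

/-- Key computation: evaluation of a product. -/
lemma wf_eval_mul (p q : D[X]) (e : D) :
    (p * q).eval e = p.sum fun j pj => pj * q.eval e * e ^ j := by
  induction p using Polynomial.induction_on' with
  | add f g hf hg =>
    rw [add_mul, eval_add, hf, hg, Polynomial.sum_add_index] <;> simp [add_mul]
  | monomial n a =>
    rw [Polynomial.sum_monomial_index _ _ (by simp)]
    rw [← C_mul_X_pow_eq_monomial, mul_assoc, X_pow_mul, ← mul_assoc,
      eval_mul_X_pow, eval_C_mul]

lemma wf_eval_mul_of_eval_eq_zero {p q : D[X]} {e : D} (h : q.eval e = 0) :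
    (p * q).eval e = 0 := by
  rw [wf_eval_mul, h]
  simp [Polynomial.sum]

lemma wf_eval_mul_conj (p q : D[X]) (e : D) (c : Dˣ) (hc : q.eval e = ↑c) :
    (p * q).eval e = p.eval (↑c * e * ↑c⁻¹) * ↑c := by
  rw [wf_eval_mul, hc, eval_eq_sum, Polynomial.sum_def, Polynomial.sum_def,
    Finset.sum_mul]
  refine Finset.sum_congr rfl fun j _ => ?_
  rw [mul_assoc, mul_assoc, Units.conj_pow, mul_assoc, mul_assoc]
  simp [← mul_assoc]

/-- Right division by a linear polynomial. -/
lemma wf_exists_div (b : D) (p : D[X]) :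
    ∃ q : D[X], p = q * (X - C b) + C (p.eval b) := by
  induction p using Polynomial.induction_on' with
  | add f g hf hg =>
    obtain ⟨qf, hqf⟩ := hf
    obtain ⟨qg, hqg⟩ := hg
    refine ⟨qf + qg, ?_⟩
    rw [eval_add, C_add, add_mul]
    conv_lhs => rw [hqf, hqg]
    noncomm_ring
  | monomial n a =>
    induction n with
    | zero =>
      exact ⟨0, by simp [monomial_zero_left]⟩
    | succ n ih =>
      obtain ⟨q, hq⟩ := ih
      refine ⟨q * X + C (a * b ^ n), ?_⟩
      have h1 : ((X : D[X]) - C b) * X = X * (X - C b) := ((commute_X (X - C b)).symm).eq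
      calc (monomial (n + 1) a : D[X]) = monomial n a * X := (monomial_mul_X n a).symm
        _ = (q * (X - C b) + C ((monomial n a).eval b)) * X := by rw [← hq]
        _ = q * ((X - C b) * X) + C (a * b ^ n) * X := by
            rw [add_mul, mul_assoc, eval_monomial]
        _ = q * (X * (X - C b)) + C (a * b ^ n) * ((X - C b) + C b) := by
            rw [h1, sub_add_cancel]
        _ = (q * X + C (a * b ^ n)) * (X - C b) + C ((monomial (n + 1) a).eval b) := by
            rw [eval_monomial, mul_add, ← C_mul, mul_assoc a, ← pow_succ]
            noncomm_ring

lemma wf_root_factor {p : D[X]} {b : D} (h : p.eval b = 0) :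
    ∃ q : D[X], p = q * (X - C b) := by
  obtain ⟨q, hq⟩ := wf_exists_div b p
  exact ⟨q, by rwa [h, C_0, add_zero] at hq⟩

/-- A nonzero polynomial vanishing at all conjugates of `u` has degree at least
`deg (minpoly F u)`. -/
lemma wf_vanish_deg (hcenter : Subalgebra.center F D = ⊥) (u : D) (hu : IsIntegral F u) :
    ∀ (n : ℕ) (q : D[X]), q.natDegree = n → q ≠ 0 →
      (∀ c : Dˣ, q.eval (↑c * u * ↑c⁻¹) = 0) →
      (minpoly F u).natDegree ≤ q.natDegree := by
  intro n
  induction n using Nat.strong_induction_on with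
  | _ n ih =>
  intro q hn hq0 hv
  -- normalize to a monic polynomial
  have ha : q.leadingCoeff ≠ 0 := leadingCoeff_ne_zero.mpr hq0
  set q1 : D[X] := C q.leadingCoeff⁻¹ * q with hq1def
  have hlc : (C q.leadingCoeff⁻¹ : D[X]).leadingCoeff * q.leadingCoeff ≠ 0 := by
    rw [leadingCoeff_C, inv_mul_cancel₀ ha]; exact one_ne_zero
  have hq1deg : q1.natDegree = q.natDegree := by
    rw [hq1def, natDegree_mul' hlc, natDegree_C, zero_add]
  have hq1monic : q1.Monic := by
    show q1.leadingCoeff = 1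
    rw [hq1def, leadingCoeff_mul' hlc, leadingCoeff_C, inv_mul_cancel₀ ha]
  have hq1v : ∀ c : Dˣ, q1.eval (↑c * u * ↑c⁻¹) = 0 := fun c => by
    rw [hq1def, eval_C_mul, hv c, mul_zero]
  by_cases hcen : ∀ i, q1.coeff i ∈ Subalgebra.center F D
  · -- all coefficients central: q1 comes from F[X]
    have hrange : ∀ i, q1.coeff i ∈ Set.range (algebraMap F D) := fun i => by
      have := hcen i
      rw [hcenter, Algebra.mem_bot] at this
      exact this
    obtain ⟨q', hq'⟩ := (Polynomial.mem_lifts q1).mp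
      ((Polynomial.lifts_iff_coeff_lifts q1).mpr hrange)
    have hinj : Function.Injective (algebraMap F D) := (algebraMap F D).injective
    have hq'monic : q'.Monic := monic_of_injective hinj (by rwa [hq'])
    have haev : Polynomial.aeval u q' = 0 := by
      have := hq1v 1
      simp only [Units.val_one, one_mul, inv_one, mul_one] at this
      rw [aeval_def, ← eval_map, hq'] at *
      exact this
    have hmin := minpoly.min F u hq'monic haev
    have : (minpoly F u).natDegree ≤ q'.natDegree := natDegree_le_natDegree hmin
    have hdeq : (map (algebraMap F D) q').natDegree = q'.natDegree :=
      hq'monic.natDegree_map _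
    rw [hq', hq1deg] at hdeq
    omega
  · -- some coefficient is non-central: conjugate and subtract
    push_neg at hcen
    obtain ⟨i, hi⟩ := hcen
    rw [Subalgebra.mem_center_iff] at hi
    push_neg at hi
    obtain ⟨g, hg⟩ := hi
    have hg0 : g ≠ 0 := fun h => by simp [h] at hg
    set c : Dˣ := Units.mk0 g hg0 with hcdef
    set φ := (wfConj (F := F) c).toRingHom with hφdef
    set q2 : D[X] := q1.map φ with hq2def
    have hq2monic : q2.Monic := hq1monic.map _
    have hq2deg : q2.natDegree = q1.natDegree := hq1monic.natDegree_map _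
    have hq2v : ∀ d : Dˣ, q2.eval (↑d * u * ↑d⁻¹) = 0 := fun d => by
      have key : (↑d * u * ↑d⁻¹ : D) = φ (↑(c⁻¹ * d) * u * ↑(c⁻¹ * d)⁻¹) := by
        show _ = ↑c * (↑(c⁻¹ * d) * u * ↑(c⁻¹ * d)⁻¹) * ↑c⁻¹
        simp [mul_assoc]
      rw [hq2def, key, eval_map, Polynomial.eval₂_at_apply, hq1v (c⁻¹ * d), map_zero]
    set q3 : D[X] := q1 - q2 with hq3def
    have hq3ne : q3 ≠ 0 := by
      intro h
      have hcoeff : q1.coeff i = q2.coeff i := by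
        have := sub_eq_zero.mp (hq3def ▸ h)
        rw [this]
      rw [hq2def, coeff_map] at hcoeff
      have : g * q1.coeff i = q1.coeff i * g := by
        have hφ : φ (q1.coeff i) = ↑c * q1.coeff i * ↑c⁻¹ := rfl
        have h2 : q1.coeff i * ↑c = ↑c * q1.coeff i * ↑c⁻¹ * ↑c := by
          conv_lhs => rw [hcoeff]
          rw [hφ]
        rw [mul_assoc, Units.inv_mul, mul_one] at h2
        exact h2.symm
      exact hg this
    have hq3v : ∀ d : Dˣ, q3.eval (↑d * u * ↑d⁻¹) = 0 := fun d => by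
      rw [hq3def, eval_sub, hq1v d, hq2v d, sub_zero]
    have hq3lt : q3.natDegree < q1.natDegree := by
      have hdeg : q1.degree = q2.degree := by
        rw [degree_eq_natDegree hq1monic.ne_zero, degree_eq_natDegree hq2monic.ne_zero,
          hq2deg]
      have hlceq : q1.leadingCoeff = q2.leadingCoeff := by
        rw [hq1monic.leadingCoeff, hq2monic.leadingCoeff]
      exact natDegree_lt_natDegree hq3ne (degree_sub_lt hdeg hq1monic.ne_zero hlceq)
    have hrec := ih q3.natDegree (by omega) q3 rfl hq3ne hq3v
    omega

lemma wf_linprod_monic (l : List D) :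
    ((l.map fun b : D => (X : D[X]) - C b).prod).Monic := by
  induction l with
  | nil => simpa using monic_one
  | cons b l ih =>
    rw [List.map_cons, List.prod_cons]
    exact (monic_X_sub_C b).mul ih

lemma wf_linprod_natDegree (l : List D) :
    ((l.map fun b : D => (X : D[X]) - C b).prod).natDegree = l.length := by
  induction l with
  | nil => simp
  | cons b l ih =>
    rw [List.map_cons, List.prod_cons, natDegree_mul', natDegree_X_sub_C, ih,
      List.length_cons]
    · omega
    · rw [(monic_X_sub_C b).leadingCoeff, (wf_linprod_monic l).leadingCoeff, one_mul]
      exact one_ne_zero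

lemma wf_step (hcenter : Subalgebra.center F D = ⊥) (u : D) (hu : IsIntegral F u) :
    ∀ (n : ℕ) (g : D[X]), g.Monic → g.natDegree = n → ∀ l : List Dˣ,
      n + l.length = (minpoly F u).natDegree →
      (minpoly F u).map (algebraMap F D) =
        g * (l.map fun c : Dˣ => (X : D[X]) - C (↑c * u * ↑c⁻¹)).prod →
      ∃ l' : List Dˣ, l'.length = (minpoly F u).natDegree ∧
        (minpoly F u).map (algebraMap F D) =
          (l'.map fun c : Dˣ => (X : D[X]) - C (↑c * u * ↑c⁻¹)).prod := by
  intro n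
  induction n with
  | zero =>
    intro g hmonic hdeg l hlen hprod
    refine ⟨l, by omega, ?_⟩
    rw [hprod, hmonic.natDegree_eq_zero.mp hdeg, one_mul]
  | succ n ih =>
    intro g hmonic hdeg l hlen hprod
    set t : D[X] := (l.map fun c : Dˣ => (X : D[X]) - C (↑c * u * ↑c⁻¹)).prod with htdef
    have htmonic : t.Monic := by
      have : (l.map fun c : Dˣ => (X : D[X]) - C (↑c * u * ↑c⁻¹)) =
          ((l.map fun c : Dˣ => (↑c * u * ↑c⁻¹ : D)).map fun b : D => (X : D[X]) - C b) := by
        simp [List.map_map, Function.comp]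
      rw [htdef, this]
      exact wf_linprod_monic _
    have htdeg : t.natDegree = l.length := by
      have : (l.map fun c : Dˣ => (X : D[X]) - C (↑c * u * ↑c⁻¹)) =
          ((l.map fun c : Dˣ => (↑c * u * ↑c⁻¹ : D)).map fun b : D => (X : D[X]) - C b) := by
        simp [List.map_map, Function.comp]
      rw [htdef, this, wf_linprod_natDegree, List.length_map]
    -- there is a conjugate of u where t does not vanish
    have hex : ∃ c : Dˣ, t.eval (↑c * u * ↑c⁻¹) ≠ 0 := by
      by_contra h
      push_neg at h
      have := wf_vanish_deg hcenter u hu t.natDegree t rfl htmonic.ne_zero h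
      omega
    obtain ⟨c, hc⟩ := hex
    set a : Dˣ := Units.mk0 _ hc with hadef
    -- the minimal polynomial vanishes at every conjugate of u
    have h0 : ((minpoly F u).map (algebraMap F D)).eval (↑c * u * ↑c⁻¹) = 0 := by
      have h1 : Polynomial.aeval ((wfConj (F := F) c) u) (minpoly F u) =
          (wfConj (F := F) c) (Polynomial.aeval u (minpoly F u)) :=
        Polynomial.aeval_algHom_apply _ _ _
      rw [minpoly.aeval, map_zero] at h1
      rw [eval_map, ← aeval_def]
      exact h1
    -- deduce that g has a root conjugate to u
    have hroot : g.eval (↑(a * c) * u * ↑(a * c)⁻¹) = 0 := by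
      have h2 := wf_eval_mul_conj g t ((c : D) * u * (c⁻¹ : Dˣ)) a rfl
      rw [← hprod, h0] at h2
      have h3 : g.eval (↑a * (↑c * u * ↑c⁻¹) * ↑a⁻¹) = 0 := by
        rcases mul_eq_zero.mp h2.symm with h | h
        · exact h
        · exact absurd h a.ne_zero
      have h4 : (↑(a * c) * u * ↑(a * c)⁻¹ : D) = ↑a * (↑c * u * ↑c⁻¹) * ↑a⁻¹ := by
        simp [mul_assoc]
      rw [h4]
      exact h3
    obtain ⟨g', hg'⟩ := wf_root_factor hroot
    have hg'ne : g' ≠ 0 := by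
      intro h
      rw [h, zero_mul] at hg'
      exact hmonic.ne_zero hg'
    have hXsC : ((X : D[X]) - C (↑(a * c) * u * ↑(a * c)⁻¹)).Monic :=
      monic_X_sub_C _
    have hlc : g'.leadingCoeff *
        ((X : D[X]) - C (↑(a * c) * u * ↑(a * c)⁻¹)).leadingCoeff ≠ 0 := by
      rw [hXsC.leadingCoeff, mul_one]
      exact leadingCoeff_ne_zero.mpr hg'ne
    have hg'monic : g'.Monic := by
      have := leadingCoeff_mul' hlc
      rw [hXsC.leadingCoeff, mul_one] at this
      rw [Monic, ← this, ← hg']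
      exact hmonic
    have hg'deg : g'.natDegree = n := by
      have := natDegree_mul' hlc
      rw [← hg', natDegree_X_sub_C, hdeg] at this
      omega
    refine ih g' hg'monic hg'deg ((a * c) :: l) (by simp; omega) ?_
    rw [List.map_cons, List.prod_cons, ← mul_assoc, ← hg', ← htdef]
    exact hprod

end Wedderburn

/-- **Wedderburn Factorization Theorem.**  Let `D` be a division ring with center `F` and
let `u ∈ D` be algebraic over `F` with minimal polynomial `f` of degree `m`.  Then there
are units `d 0, …, d (m-1) ∈ D^*` such that in `D[X]` the polynomial `f` factors as the
(ordered) product of the linear factors `X - (d i) * u * (d i)⁻¹`; in particular `f`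
splits over `D` into linear factors whose roots are conjugates of `u`. -/
theorem stmt_16 {F : Type v} {D : Type u} [Field F] [DivisionRing D] [Algebra F D]
    (hcenter : Subalgebra.center F D = ⊥)
    (u : D) (hu : IsIntegral F u) :
    ∃ d : Fin (minpoly F u).natDegree → Dˣ,
      (minpoly F u).map (algebraMap F D) =
        (List.ofFn fun i : Fin (minpoly F u).natDegree =>
          (X : D[X]) - C ((d i : D) * u * ((d i)⁻¹ : Dˣ))).prod := by
  have hmonic : ((minpoly F u).map (algebraMap F D)).Monic :=
    (minpoly.monic hu).map _
  have hdeg : ((minpoly F u).map (algebraMap F D)).natDegree = (minpoly F u).natDegree :=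
    (minpoly.monic hu).natDegree_map _
  obtain ⟨l, hlen, hprod⟩ := wf_step hcenter u hu (minpoly F u).natDegree
    ((minpoly F u).map (algebraMap F D)) hmonic hdeg [] (by simp) (by simp)
  refine ⟨fun i => l.get (Fin.cast hlen.symm i), ?_⟩
  rw [hprod]
  have key : ∀ (k : ℕ) (hk : l.length = k),
      (l.map fun c : Dˣ => (X : D[X]) - C (↑c * u * ↑c⁻¹)).prod =
      (List.ofFn fun i : Fin k =>
        (X : D[X]) - C ((l.get (Fin.cast hk.symm i) : D) * u *
          ((l.get (Fin.cast hk.symm i))⁻¹ : Dˣ))).prod := by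
    intro k hk
    subst hk
    congr 1
    conv_lhs => rw [← List.ofFn_get l]
    rw [List.map_ofFn]
    rfl
  exact key _ hlen
end

section
/- Let D be a division ring with center F and let N be a normal subgroup of D^*. If u ∈ N is algebraic over F and the degree of the minimal polynomial of u over F is m, then u^m = N_{F(u)/F}(u)·c for some c in the commutator subgroup [D^*, N] (the subgroup of D^* generated by all commutators a^{-1}b^{-1}ab with a ∈ D^*, b ∈ N), where F(u) is the subfield of D generated by F and u and N_{F(u)/F} is the field norm. In particular u^m lies in the subgroup of D^* generated by the center Z(N) of N together with [D^*, N]. -/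
/-!
Wedderburn's factorization theorem: the minimal polynomial `f` of `u` over the center `F`
factors in `D[X]` as `(X - u₁) ⋯ (X - uₘ)` with every `uᵢ` conjugate to `u`. A nonzero
polynomial vanishing on the whole conjugacy class of `u` has degree at least `m`, since one of
least degree is fixed by conjugating its coefficients and hence lies in `F[X]`; so as long as
fewer than `m` factors have been split off, their product misses some conjugate of `u`, and the
product formula for evaluation produces a further conjugate that is a root of the cofactor.
Comparing constant coefficients gives `N_{F(u)/F}(u) = ±f(0) = u₁ ⋯ uₘ`, and each `uᵢ` is
congruent to `u` modulo `[D^*, N]` because `u ∈ N`.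
-/

universe u v

open Polynomial

namespace Polynomial

variable {R : Type*} [Ring R]

theorem exists_mul_X_sub_C_eq_sub_C_eval (p : R[X]) (c : R) :
    ∃ q : R[X], q * (X - C c) = p - C (p.eval c) := by
  induction p using Polynomial.induction_on' with
  | add p r hp hr =>
    obtain ⟨q, hq⟩ := hp
    obtain ⟨s, hs⟩ := hr
    exact ⟨q + s, by rw [add_mul, hq, hs, eval_add, C_add]; abel⟩
  | monomial n b =>
    refine ⟨C b * ∑ i ∈ Finset.range n, X ^ i * C c ^ (n - 1 - i), ?_⟩
    rw [mul_assoc, (commute_X (C c)).geom_sum₂_mul, eval_monomial,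
      ← C_mul_X_pow_eq_monomial, C_mul, C_pow, mul_sub]

-- `eval` puts the coefficients to the left of the powers of `x`, so over a noncommutative ring
-- roots correspond to right factors.
theorem exists_eq_mul_X_sub_C_of_eval_eq_zero {p : R[X]} {c : R} (h : p.eval c = 0) :
    ∃ q : R[X], p = q * (X - C c) := by
  obtain ⟨q, hq⟩ := exists_mul_X_sub_C_eq_sub_C_eval p c
  exact ⟨q, by rw [hq, h, C_0, sub_zero]⟩

theorem eval_mul_of_eval_eq_unit (g : R[X]) {f : R[X]} {a : R} {d : Rˣ} (hf : f.eval a = d) :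
    (g * f).eval a = g.eval (ConjAct.toConjAct d • a) * d := by
  induction g using Polynomial.induction_on' with
  | add p q hp hq => rw [add_mul, eval_add, hp, hq, eval_add, add_mul]
  | monomial n b =>
    rw [← C_mul_X_pow_eq_monomial, mul_assoc, eval_C_mul, X_pow_mul, eval_mul_X_pow, hf,
      eval_C_mul, eval_X_pow, ConjAct.units_smul_def, ConjAct.ofConjAct_toConjAct,
      Units.conj_pow]
    simp [mul_assoc]

theorem eval_smul_smul {M : Type*} [Monoid M] [MulSemiringAction M R] (m : M) (p : R[X])
    (x : R) : (m • p).eval (m • x) = m • p.eval x := by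
  rw [smul_eq_map, eval_map, ← MulSemiringAction.toRingHom_apply, eval₂_hom]
  rfl

theorem monic_list_prod_X_sub_C {ι : Type*} (l : List ι) (f : ι → R) :
    (l.map fun i => X - C (f i)).prod.Monic := by
  induction l with
  | nil => exact monic_one
  | cons i l ih => exact (monic_X_sub_C (f i)).mul ih

theorem natDegree_list_prod_X_sub_C [Nontrivial R] {ι : Type*} (l : List ι) (f : ι → R) :
    (l.map fun i => X - C (f i)).prod.natDegree = l.length := by
  induction l with
  | nil => simp
  | cons i l ih =>
    rw [List.map_cons, List.prod_cons, (monic_X_sub_C (f i)).natDegree_mul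
      (monic_list_prod_X_sub_C l f), ih, natDegree_X_sub_C, List.length_cons, add_comm]

theorem constantCoeff_list_prod_X_sub_C {ι : Type*} (l : List ι) (f : ι → R) :
    constantCoeff (l.map fun i => X - C (f i)).prod = (-1) ^ l.length * (l.map f).prod := by
  rw [map_list_prod, List.map_map, ← List.length_map f, ← List.prod_map_neg, List.map_map]
  congr 1
  ext i
  simp

end Polynomial

theorem minpoly.natDegree_le_of_monic_of_mem_lifts {A B : Type*} [CommRing A] [Ring B]
    [Nontrivial B] [Algebra A B] {x : B} {p : B[X]} (hp : p.Monic)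
    (hlifts : p ∈ lifts (algebraMap A B)) (hx : p.eval x = 0) :
    (minpoly A x).natDegree ≤ p.natDegree := by
  obtain ⟨p₀, rfl, hdeg, hmonic⟩ := lifts_and_degree_eq_and_monic hlifts hp
  rw [eval_map_algebraMap] at hx
  rw [← natDegree_eq_of_degree_eq hdeg]
  exact natDegree_le_natDegree (minpoly.min A x hmonic hx)

section DivisionRing

variable {F D : Type*} [Field F] [DivisionRing D] [Algebra F D] [Algebra.IsCentral F D]

theorem mem_lifts_of_forall_conjAct_smul_eq {p : D[X]} (hp : ∀ g : ConjAct Dˣ, g • p = p) :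
    p ∈ lifts (algebraMap F D) := by
  refine (lifts_iff_coeff_lifts p).2 fun n => ?_
  suffices p.coeff n ∈ Subalgebra.center F D from Algebra.mem_bot.1 (Algebra.IsCentral.out this)
  refine Subalgebra.mem_center_iff.2 fun b => ?_
  rcases eq_or_ne b 0 with rfl | hb
  · rw [zero_mul, mul_zero]
  have h := congrArg (coeff · n) (hp (ConjAct.toConjAct (Units.mk0 b hb)))
  simp only [coeff_smul, ConjAct.units_smul_def, ConjAct.ofConjAct_toConjAct, Units.val_mk0,
    Units.val_inv_eq_inv_val] at h
  exact ((eq_mul_inv_iff_mul_eq₀ hb).1 h.symm).symm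

variable (F) in
theorem natDegree_minpoly_le_of_forall_eval_conjAct_smul_eq_zero (a : D) {p : D[X]}
    (hp : p ≠ 0) (hroot : ∀ g : ConjAct Dˣ, p.eval (g • a) = 0) :
    (minpoly F a).natDegree ≤ p.natDegree := by
  induction hn : p.natDegree using Nat.strong_induction_on generalizing p with
  | _ n ih =>
  set q := C p.leadingCoeff⁻¹ * p
  have hlc : p.leadingCoeff ≠ 0 := leadingCoeff_ne_zero.2 hp
  have hq : q.Monic := monic_C_mul_of_mul_leadingCoeff_eq_one (inv_mul_cancel₀ hlc)
  have hqn : q.natDegree = n := by rw [natDegree_C_mul (inv_ne_zero hlc), hn]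
  have hqroot (g : ConjAct Dˣ) : q.eval (g • a) = 0 := by rw [eval_C_mul, hroot g, mul_zero]
  by_cases hfix : ∀ g : ConjAct Dˣ, g • q = q
  · rw [← hqn]
    exact minpoly.natDegree_le_of_monic_of_mem_lifts hq (mem_lifts_of_forall_conjAct_smul_eq hfix)
      (by simpa using hqroot 1)
  push Not at hfix
  obtain ⟨g, hg⟩ := hfix
  -- `q` and `g • q` are monic of the same degree and both vanish on the conjugacy class of `a`
  have hgq : (g • q).Monic := by rw [smul_eq_map]; exact hq.map _
  have hlt : (q - g • q).natDegree < n := by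
    rw [← hqn]
    refine natDegree_lt_natDegree (sub_ne_zero.2 hg.symm) (degree_sub_lt_left ?_ hq.ne_zero ?_)
    · rw [smul_eq_map, hq.degree_map]
    · rw [hq.leadingCoeff, hgq.leadingCoeff]
  refine (ih _ hlt (sub_ne_zero.2 hg.symm) (fun h => ?_) rfl).trans hlt.le
  have hconj : h • a = g • (g⁻¹ * h) • a := by rw [smul_smul, mul_inv_cancel_left]
  rw [eval_sub, hqroot, zero_sub, neg_eq_zero, hconj, eval_smul_smul, hqroot, smul_zero]

theorem exists_eq_mul_prod_X_sub_C_conjAct_smul_cons {a : D} {f q : D[X]}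
    (hroot : ∀ g : ConjAct Dˣ, f.eval (g • a) = 0) {L : List (ConjAct Dˣ)}
    (hfq : f = q * (L.map fun g => X - C (g • a)).prod)
    (hlen : L.length < (minpoly F a).natDegree) :
    ∃ (g : ConjAct Dˣ) (q' : D[X]), f = q' * ((g :: L).map fun g => X - C (g • a)).prod := by
  set h := (L.map fun g => X - C (g • a)).prod
  obtain ⟨g, hg⟩ : ∃ g : ConjAct Dˣ, h.eval (g • a) ≠ 0 := by
    by_contra! hall
    have := natDegree_minpoly_le_of_forall_eval_conjAct_smul_eq_zero F a
      (monic_list_prod_X_sub_C L _).ne_zero hall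
    rw [natDegree_list_prod_X_sub_C] at this
    omega
  set d := Units.mk0 _ hg
  have hq : q.eval ((ConjAct.toConjAct d * g) • a) = 0 := by
    have := hroot g
    rw [hfq, eval_mul_of_eval_eq_unit q (d := d) rfl] at this
    rw [mul_smul]
    exact (mul_eq_zero.1 this).resolve_right d.ne_zero
  obtain ⟨q', rfl⟩ := exists_eq_mul_X_sub_C_of_eval_eq_zero hq
  exact ⟨ConjAct.toConjAct d * g, q', by rw [hfq, mul_assoc]; rfl⟩

theorem exists_map_minpoly_eq_prod_X_sub_C_conjAct_smul {a : D} (ha : IsIntegral F a) :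
    ∃ L : List (ConjAct Dˣ),
      (minpoly F a).map (algebraMap F D) = (L.map fun g => X - C (g • a)).prod := by
  set f := (minpoly F a).map (algebraMap F D)
  have hf : f.Monic := (minpoly.monic ha).map _
  have hfn : f.natDegree = (minpoly F a).natDegree := (minpoly.monic ha).natDegree_map _
  have hroot (g : ConjAct Dˣ) : f.eval (g • a) = 0 := by
    rw [eval_map_algebraMap, ← MulSemiringAction.toAlgHom_apply F, aeval_algHom_apply,
      minpoly.aeval, map_zero]
  have hsplit (k : ℕ) (hk : k ≤ f.natDegree) : ∃ (L : List (ConjAct Dˣ)) (q : D[X]),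
      L.length = k ∧ f = q * (L.map fun g => X - C (g • a)).prod := by
    induction k with
    | zero => exact ⟨[], f, rfl, by simp⟩
    | succ k ih =>
      obtain ⟨L, q, hlen, hfq⟩ := ih (by omega)
      obtain ⟨g, q', hfq'⟩ :=
        exists_eq_mul_prod_X_sub_C_conjAct_smul_cons (F := F) hroot hfq (by omega)
      exact ⟨g :: L, q', by rw [List.length_cons, hlen], hfq'⟩
  obtain ⟨L, q, hlen, hfq⟩ := hsplit _ le_rfl
  have hh := monic_list_prod_X_sub_C L (· • a)
  have hqmonic : q.Monic := by rw [Monic, ← leadingCoeff_mul_monic hh, ← hfq, hf.leadingCoeff]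
  have hq : q = 1 := by
    rw [← hqmonic.natDegree_eq_zero]
    have := congrArg natDegree hfq
    rw [hqmonic.natDegree_mul hh, natDegree_list_prod_X_sub_C, hlen] at this
    omega
  exact ⟨L, by rw [hfq, hq, one_mul]⟩

end DivisionRing

open scoped IsMulCommutative in
theorem Algebra.norm_adjoin_singleton_self {F A : Type*} [Field F] [Ring A] [Algebra F A]
    {a : A} (ha : IsIntegral F a) :
    Algebra.norm F (⟨a, Algebra.self_mem_adjoin_singleton F a⟩ : Algebra.adjoin F {a}) =
      (-1) ^ (minpoly F a).natDegree * (minpoly F a).coeff 0 := by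
  set x : Algebra.adjoin F {a} := ⟨a, Algebra.self_mem_adjoin_singleton F a⟩
  have hinj : Function.Injective (Algebra.adjoin F {a}).val := Subtype.coe_injective
  have hmin : minpoly F x = minpoly F a := (minpoly.algHom_eq _ hinj x).symm
  have hx : IsIntegral F x := (isIntegral_algHom_iff _ hinj).mp ha
  have htop : Algebra.adjoin F {x} = ⊤ := by
    rw [← Algebra.adjoin_adjoin_coe_preimage]
    congr 1
    ext y
    simp [x, Subtype.ext_iff]
  simpa [hmin] using
    Algebra.PowerBasis.norm_gen_eq_coeff_zero_minpoly (PowerBasis.ofAdjoinEqTop hx htop)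

theorem exists_algebraMap_norm_eq_prod_conjAct_smul {F D : Type*} [Field F] [DivisionRing D]
    [Algebra F D] [Algebra.IsCentral F D] {a : D} (ha : IsIntegral F a) :
    ∃ L : List (ConjAct Dˣ), L.length = (minpoly F a).natDegree ∧
      algebraMap F D (Algebra.norm F
        (⟨a, Algebra.self_mem_adjoin_singleton F a⟩ : Algebra.adjoin F {a})) =
        (L.map (· • a)).prod := by
  obtain ⟨L, hL⟩ := exists_map_minpoly_eq_prod_X_sub_C_conjAct_smul ha
  have hlen : L.length = (minpoly F a).natDegree := by
    rw [← (minpoly.monic ha).natDegree_map (algebraMap F D), hL, natDegree_list_prod_X_sub_C]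
  have hcoeff := congrArg constantCoeff hL
  rw [constantCoeff_apply, coeff_map, constantCoeff_list_prod_X_sub_C, hlen] at hcoeff
  refine ⟨L, hlen, ?_⟩
  rw [Algebra.norm_adjoin_singleton_self ha, map_mul, hcoeff, map_pow, map_neg, map_one,
    ← mul_assoc, ← pow_add, Even.neg_one_pow ⟨_, rfl⟩, one_mul]

open scoped commutatorElement in
theorem Subgroup.inv_prod_map_conjAct_smul_mul_pow_mem_commutator {G : Type*} [Group G]
    {N : Subgroup G} [N.Normal] {u : G} (hu : u ∈ N) (L : List (ConjAct G)) :
    (L.map (· • u)).prod⁻¹ * u ^ L.length ∈ ⁅(⊤ : Subgroup G), N⁆ := by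
  have : (QuotientGroup.mk' ⁅(⊤ : Subgroup G), N⁆) (L.map (· • u)).prod =
      QuotientGroup.mk' _ (u ^ L.length) := by
    rw [map_list_prod, map_pow, List.map_map, List.prod_eq_pow_card _ (QuotientGroup.mk' _ u),
      List.length_map]
    simp only [List.mem_map, Function.comp_apply, forall_exists_index, and_imp]
    rintro _ g - rfl
    refine QuotientGroup.eq.2 ?_
    have : (g • u)⁻¹ * u = ⁅ConjAct.ofConjAct g, u⁻¹⁆ := by
      simp [ConjAct.smul_def, commutatorElement_def, mul_assoc]
    rw [this]
    exact commutator_mem_commutator (mem_top _) (inv_mem hu)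
  exact QuotientGroup.eq.1 this

/-- Let `D` be a division ring with center `F` and `N` a normal subgroup of `D^*`.  If
`u ∈ N` is algebraic over `F` with minimal polynomial of degree `m`, then
`u^m = N_{F(u)/F}(u) · c` for some `c` in the commutator subgroup `[D^*, N]`, where
`F(u) = F[u]` is the subfield of `D` generated by `F` and `u` and `N_{F(u)/F}` is the
field norm.  In particular `u^m` lies in the subgroup generated by the center `Z(N)` of
`N` together with `[D^*, N]`. -/
theorem stmt_17 {F : Type v} {D : Type u} [Field F] [DivisionRing D] [Algebra F D]
    (hcenter : Subalgebra.center F D = ⊥)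
    (N : Subgroup Dˣ) (hN : N.Normal)
    (u : Dˣ) (hu : u ∈ N) (hint : IsIntegral F (u : D)) :
    (∃ c ∈ ⁅(⊤ : Subgroup Dˣ), N⁆,
      ((u : D)) ^ (minpoly F (u : D)).natDegree =
        algebraMap F D (Algebra.norm F
          (⟨(u : D), Algebra.self_mem_adjoin_singleton F (u : D)⟩ :
            Algebra.adjoin F {(u : D)})) * (c : D)) ∧
    u ^ (minpoly F (u : D)).natDegree ∈
      (Subgroup.centralizer (N : Set Dˣ) ⊓ N) ⊔ ⁅(⊤ : Subgroup Dˣ), N⁆ := by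
  have : Algebra.IsCentral F D := ⟨hcenter.le⟩
  obtain ⟨L, hlen, hnorm⟩ := exists_algebraMap_norm_eq_prod_conjAct_smul (F := F) hint
  set m := (minpoly F (u : D)).natDegree
  set z : Dˣ := (L.map (· • u)).prod
  have hz : (z : D) = (L.map (· • (u : D))).prod := by
    rw [← Units.coeHom_apply, map_list_prod, List.map_map]
    rfl
  rw [← hnorm] at hz
  have hc : z⁻¹ * u ^ m ∈ ⁅(⊤ : Subgroup Dˣ), N⁆ := by
    simpa only [hlen] using Subgroup.inv_prod_map_conjAct_smul_mul_pow_mem_commutator hu L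
  have hzN : z ∈ N := by
    rw [show z = u ^ m * (z⁻¹ * u ^ m)⁻¹ by group]
    exact N.mul_mem (N.pow_mem hu m) (N.inv_mem (Subgroup.commutator_le_right ⊤ N hc))
  have hzcen : z ∈ Subgroup.centralizer (N : Set Dˣ) :=
    Subgroup.mem_centralizer_iff.2 fun g _ => Units.ext <| by
      rw [Units.val_mul, Units.val_mul, hz, Algebra.commutes]
  refine ⟨⟨z⁻¹ * u ^ m, hc, ?_⟩, ?_⟩
  · rw [← hz, ← Units.val_pow_eq_pow_val, ← Units.val_mul, mul_inv_cancel_left]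
  · rw [← mul_inv_cancel_left z (u ^ m)]
    exact Subgroup.mul_mem _ (Subgroup.mem_sup_left ⟨hzcen, hzN⟩) (Subgroup.mem_sup_right hc)
end
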